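/- arXiv:nlin/0301010 — 2 statements merged into one kernel-verified Lean document; each statement's English description precedes it below -/
import Mathlib

section
/- Let N ≥ 1, let ε₁,…,ε_N be real constants, and let r₁,…,r_N : ℝ² → ℝ be smooth functions of (x,t) with r_i(x,t) > 0 everywhere, satisfying the generalized ε-system ∂_t r_i = [r_i − Σ_{m=1}^N ε_m r_m] ∂_x r_i for every i. Define c₀ := Σ_{m=1}^N ε_m ln r_m and, for k ∈ ℤ with k ≠ 0, c_k := (1/k) Σ_{m=1}^N ε_m r_m^k. Then for every k ∈ ℤ the hydrodynamic chain ∂_t c_k = ∂_x c_{k+1} − c₁ ∂_x c_k holds. -/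
open Real Set

/-- Partial derivative in the first variable. -/
noncomputable def pdx (f : ℝ → ℝ → ℝ) (x t : ℝ) : ℝ := deriv (fun x' => f x' t) x

/-- Partial derivative in the second variable. -/
noncomputable def pdt (f : ℝ → ℝ → ℝ) (x t : ℝ) : ℝ := deriv (fun t' => f x t') t

/-!
Every moment obeys the same differentiation rule: `∂ c_k = Σ ε_m r_m^(k-1) ∂ r_m` for `k ≠ 0`,
and for `k = 0` too, since `∂ ln r_m = r_m⁻¹ ∂ r_m`. Substituting the ε-system into `∂ₜ c_k`
splits `r_m^(k-1) (r_m − c₁) ∂ₓ r_m` into `r_m^k ∂ₓ r_m`, the summand of `∂ₓ c_{k+1}`, minus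
`c₁ r_m^(k-1) ∂ₓ r_m`, the summand of `c₁ ∂ₓ c_k`.
-/

open Finset

section Moments

variable {ι : Type*} [Fintype ι] (ε : ι → ℝ)

noncomputable def moment (k : ℤ) (v : ι → ℝ) : ℝ :=
  if k = 0 then ∑ m, ε m * Real.log (v m) else (k : ℝ)⁻¹ * ∑ m, ε m * v m ^ k

lemma hasDerivAt_moment (k : ℤ) {g : ℝ → ι → ℝ} {g' : ι → ℝ} {s : ℝ}
    (hg : HasDerivAt g g' s) (hne : ∀ m, g s m ≠ 0) :
    HasDerivAt (fun u => moment ε k (g u)) (∑ m, ε m * g s m ^ (k - 1) * g' m) s := by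
  rw [hasDerivAt_pi] at hg
  by_cases hk : k = 0
  · subst hk
    simp only [moment, if_true]
    refine HasDerivAt.fun_sum fun m _ => ?_
    refine (((hg m).log (hne m)).const_mul (ε m)).congr_deriv ?_
    rw [zero_sub, zpow_neg_one]
    ring
  · have hk' : (k : ℝ) ≠ 0 := Int.cast_ne_zero.mpr hk
    simp only [moment, hk, if_false]
    have hsum : HasDerivAt (fun u => ∑ m, ε m * g u m ^ k)
        (∑ m, ε m * ((k : ℝ) * g s m ^ (k - 1) * g' m)) s :=
      HasDerivAt.fun_sum fun m _ =>
        ((hasDerivAt_zpow k (g s m) (Or.inl (hne m))).comp (h₂ := fun y => y ^ k) s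
          (hg m)).const_mul (ε m)
    refine (hsum.const_mul (k : ℝ)⁻¹).congr_deriv ?_
    rw [mul_sum]
    refine sum_congr rfl fun m _ => ?_
    field_simp

lemma moment_chain_identity (k : ℤ) {v : ι → ℝ} (hv : ∀ m, v m ≠ 0) (d : ι → ℝ) :
    ∑ m, ε m * v m ^ (k - 1) * ((v m - ∑ n, ε n * v n) * d m)
      = ∑ m, ε m * v m ^ (k + 1 - 1) * d m
        - (∑ n, ε n * v n) * ∑ m, ε m * v m ^ (k - 1) * d m := by
  rw [mul_sum, ← sum_sub_distrib]
  refine sum_congr rfl fun m _ => ?_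
  rw [add_sub_cancel_right, ← sub_add_cancel k 1, zpow_add_one₀ (hv m), add_sub_cancel_right]
  ring

end Moments

lemma hasDerivAt_pdx {F : ℝ → ℝ → ℝ} {x t : ℝ}
    (hF : DifferentiableAt ℝ (fun p : ℝ × ℝ => F p.1 p.2) (x, t)) :
    HasDerivAt (fun x' => F x' t) (pdx F x t) x :=
  (hF.comp (f := fun x' => (x', t)) x
    (differentiableAt_id.prodMk (differentiableAt_const t))).hasDerivAt

lemma hasDerivAt_pdt {F : ℝ → ℝ → ℝ} {x t : ℝ}
    (hF : DifferentiableAt ℝ (fun p : ℝ × ℝ => F p.1 p.2) (x, t)) :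
    HasDerivAt (fun t' => F x t') (pdt F x t) t :=
  (hF.comp (f := fun t' => (x, t')) t
    ((differentiableAt_const x).prodMk differentiableAt_id)).hasDerivAt

theorem generalized_eps_system_gives_chain_general
    (N : ℕ) (ε : Fin N → ℝ)
    (r : ℝ → ℝ → Fin N → ℝ)
    (hr : ContDiff ℝ (⊤ : ℕ∞) (fun p : ℝ × ℝ => r p.1 p.2))
    (hpos : ∀ (x t : ℝ) (i : Fin N), 0 < r x t i)
    (hsys : ∀ (i : Fin N) (x t : ℝ),
      pdt (fun x' t' => r x' t' i) x t
        = (r x t i - ∑ m, ε m * r x t m) * pdx (fun x' t' => r x' t' i) x t)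
    (c : ℤ → ℝ → ℝ → ℝ)
    (hc0 : ∀ x t : ℝ, c 0 x t = ∑ m, ε m * Real.log (r x t m))
    (hck : ∀ k : ℤ, k ≠ 0 → ∀ x t : ℝ,
      c k x t = ((k : ℝ))⁻¹ * ∑ m, ε m * (r x t m) ^ k) :
    ∀ (k : ℤ) (x t : ℝ),
      pdt (c k) x t = pdx (c (k + 1)) x t - c 1 x t * pdx (c k) x t := by
  intro k x t
  have hc : ∀ k, c k = fun x t => moment ε k (r x t) := by
    intro k
    funext x t
    by_cases hk : k = 0
    · simp only [moment, hk, if_true, hc0]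
    · simp only [moment, hk, if_false, hck k hk]
  have hr_at : ∀ m, DifferentiableAt ℝ (fun p : ℝ × ℝ => r p.1 p.2 m) (x, t) :=
    differentiableAt_pi.1 ((hr.differentiable (by simp)) (x, t))
  have hrx : HasDerivAt (fun x' => r x' t) (fun m => pdx (fun x' t' => r x' t' m) x t) x :=
    hasDerivAt_pi.2 fun m => hasDerivAt_pdx (F := fun x' t' => r x' t' m) (hr_at m)
  have hrt : HasDerivAt (fun t' => r x t') (fun m => pdt (fun x' t' => r x' t' m) x t) t :=
    hasDerivAt_pi.2 fun m => hasDerivAt_pdt (F := fun x' t' => r x' t' m) (hr_at m)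
  have hdx : ∀ k, pdx (c k) x t
      = ∑ m, ε m * r x t m ^ (k - 1) * pdx (fun x' t' => r x' t' m) x t := fun k => by
    rw [hc k]
    exact (hasDerivAt_moment ε k hrx fun m => (hpos x t m).ne').deriv
  have hdt : pdt (c k) x t
      = ∑ m, ε m * r x t m ^ (k - 1) * pdt (fun x' t' => r x' t' m) x t := by
    rw [hc k]
    exact (hasDerivAt_moment ε k hrt fun m => (hpos x t m).ne').deriv
  have hc1 : c 1 x t = ∑ m, ε m * r x t m := by simpa using hck 1 one_ne_zero x t
  rw [hdt, hdx, hdx, hc1]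
  simp only [hsys]
  exact moment_chain_identity ε k (fun m => (hpos x t m).ne') _

/-- For positive solutions of the generalized ε-system
`∂ₜ rᵢ = [rᵢ − Σ ε_m r_m] ∂ₓ rᵢ`, the moments `c₀ = Σ ε_m ln r_m`,
`c_k = (1/k) Σ ε_m r_m^k` (k ≠ 0) satisfy the hydrodynamic chain
`∂ₜ c_k = ∂ₓ c_{k+1} − c₁ ∂ₓ c_k` for all `k ∈ ℤ`. -/
theorem generalized_eps_system_gives_chain
    (N : ℕ) (hN : 1 ≤ N) (ε : Fin N → ℝ)
    (r : ℝ → ℝ → Fin N → ℝ)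
    (hr : ContDiff ℝ (⊤ : ℕ∞) (fun p : ℝ × ℝ => r p.1 p.2))
    (hpos : ∀ (x t : ℝ) (i : Fin N), 0 < r x t i)
    (hsys : ∀ (i : Fin N) (x t : ℝ),
      pdt (fun x' t' => r x' t' i) x t
        = (r x t i - ∑ m, ε m * r x t m) * pdx (fun x' t' => r x' t' i) x t)
    (c : ℤ → ℝ → ℝ → ℝ)
    (hc0 : ∀ x t : ℝ, c 0 x t = ∑ m, ε m * Real.log (r x t m))
    (hck : ∀ k : ℤ, k ≠ 0 → ∀ x t : ℝ,
      c k x t = ((k : ℝ))⁻¹ * ∑ m, ε m * (r x t m) ^ k) :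
    ∀ (k : ℤ) (x t : ℝ),
      pdt (c k) x t = pdx (c (k + 1)) x t - c 1 x t * pdx (c k) x t :=
  generalized_eps_system_gives_chain_general N ε r hr hpos hsys c hc0 hck
end

section
/- Let N ≥ 1 and let u₁,…,u_N, η₁,…,η_N : ℝ² → ℝ be smooth functions of (x,t) satisfying the dispersionless vector nonlinear Schrödinger system ∂_t u_i = ∂_x[u_i²/2 + Σ_{k=1}^N η_k] and ∂_t η_i = ∂_x(u_i η_i) for every i = 1,…,N. Define A_k := Σ_{i=1}^N u_i^k η_i for k = 0, 1, 2, …. Then the Benney momentum chain holds: ∂_t A_k = ∂_x A_{k+1} + k A_{k−1} ∂_x A₀ for every k ≥ 0, where for k = 0 the term k A_{k−1} ∂_x A₀ is zero. -/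
open Real Set

/-!
Since `A₀ = Σ ηⱼ`, the system reads `∂ₜ uᵢ = uᵢ ∂ₓuᵢ + ∂ₓA₀`, `∂ₜ ηᵢ = ∂ₓ(uᵢ ηᵢ)`.
Substituting this into `∂ₜ(uᵢᵏ ηᵢ)` gives `∂ₓ(uᵢᵏ⁺¹ ηᵢ) + k uᵢᵏ⁻¹ ηᵢ ∂ₓA₀`, a purely
algebraic identity for each `i`; summing over `i` gives the chain.
-/

section Slices

variable {f g : ℝ → ℝ → ℝ}

theorem differentiableAt_fun_fst (hf : Differentiable ℝ (Function.uncurry f)) (x t : ℝ) :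
    DifferentiableAt ℝ (fun x' => f x' t) x :=
  (hf.comp (differentiable_id.prodMk (differentiable_const t))).differentiableAt

theorem differentiableAt_fun_snd (hf : Differentiable ℝ (Function.uncurry f)) (x t : ℝ) :
    DifferentiableAt ℝ (fun t' => f x t') t :=
  (hf.comp ((differentiable_const x).prodMk differentiable_id)).differentiableAt

theorem pdx_mul (hf : Differentiable ℝ (Function.uncurry f))
    (hg : Differentiable ℝ (Function.uncurry g)) (x t : ℝ) :
    pdx (fun x' t' => f x' t' * g x' t') x t = pdx f x t * g x t + f x t * pdx g x t :=
  ((differentiableAt_fun_fst hf x t).hasDerivAt.mul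
    (differentiableAt_fun_fst hg x t).hasDerivAt).deriv

theorem pdx_sq_div_two_add_sum {ι : Type*} [Fintype ι] {η : ι → ℝ → ℝ → ℝ}
    (hf : Differentiable ℝ (Function.uncurry f))
    (hη : ∀ i, Differentiable ℝ (Function.uncurry (η i))) (x t : ℝ) :
    pdx (fun x' t' => f x' t' ^ 2 / 2 + ∑ i, η i x' t') x t
      = f x t * pdx f x t + ∑ i, pdx (η i) x t := by
  have h := (((differentiableAt_fun_fst hf x t).hasDerivAt.pow 2).div_const 2).add
    (HasDerivAt.fun_sum (u := Finset.univ) fun i _ =>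
      (differentiableAt_fun_fst (hη i) x t).hasDerivAt)
  unfold pdx
  refine h.deriv.trans ?_
  push_cast
  ring

end Slices

section Moments

variable {ι : Type*} [Fintype ι]

theorem deriv_sum_pow_mul {u η : ι → ℝ → ℝ} {x : ℝ} (hu : ∀ i, DifferentiableAt ℝ (u i) x)
    (hη : ∀ i, DifferentiableAt ℝ (η i) x) (k : ℕ) :
    deriv (fun y => ∑ i, u i y ^ k * η i y) x
      = ∑ i, (k * u i x ^ (k - 1) * deriv (u i) x * η i x + u i x ^ k * deriv (η i) x) :=
  (HasDerivAt.fun_sum fun i _ => ((hu i).hasDerivAt.pow k).mul (hη i).hasDerivAt).deriv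

variable {u η : ι → ℝ → ℝ → ℝ}

theorem pdx_sum_pow_mul (hu : ∀ i, Differentiable ℝ (Function.uncurry (u i)))
    (hη : ∀ i, Differentiable ℝ (Function.uncurry (η i))) (k : ℕ) (x t : ℝ) :
    pdx (fun x' t' => ∑ i, u i x' t' ^ k * η i x' t') x t
      = ∑ i, (k * u i x t ^ (k - 1) * pdx (u i) x t * η i x t + u i x t ^ k * pdx (η i) x t) :=
  deriv_sum_pow_mul (fun i => differentiableAt_fun_fst (hu i) x t)
    (fun i => differentiableAt_fun_fst (hη i) x t) k

theorem pdt_sum_pow_mul (hu : ∀ i, Differentiable ℝ (Function.uncurry (u i)))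
    (hη : ∀ i, Differentiable ℝ (Function.uncurry (η i))) (k : ℕ) (x t : ℝ) :
    pdt (fun x' t' => ∑ i, u i x' t' ^ k * η i x' t') x t
      = ∑ i, (k * u i x t ^ (k - 1) * pdt (u i) x t * η i x t + u i x t ^ k * pdt (η i) x t) :=
  deriv_sum_pow_mul (fun i => differentiableAt_fun_snd (hu i) x t)
    (fun i => differentiableAt_fun_snd (hη i) x t) k

end Moments

theorem benney_summand_identity (k : ℕ) (u ux η ηx s : ℝ) :
    k * u ^ (k - 1) * (u * ux + s) * η + u ^ k * (ux * η + u * ηx)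
      = ((k + 1 : ℕ) * u ^ (k + 1 - 1) * ux * η + u ^ (k + 1) * ηx) + k * (u ^ (k - 1) * η * s) := by
  cases k with
  | zero => simp
  | succ n =>
    simp only [Nat.add_sub_cancel]
    push_cast
    ring

theorem zakharov_reduction_satisfies_benney_chain_general
    (N : ℕ) (u η : Fin N → ℝ → ℝ → ℝ)
    (hu : ∀ i, ContDiff ℝ (⊤ : ℕ∞) (Function.uncurry (u i)))
    (hη : ∀ i, ContDiff ℝ (⊤ : ℕ∞) (Function.uncurry (η i)))
    (h1 : ∀ (i : Fin N) (x t : ℝ),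
      pdt (u i) x t = pdx (fun x' t' => (u i x' t') ^ 2 / 2 + ∑ k, η k x' t') x t)
    (h2 : ∀ (i : Fin N) (x t : ℝ),
      pdt (η i) x t = pdx (fun x' t' => u i x' t' * η i x' t') x t)
    (A : ℕ → ℝ → ℝ → ℝ)
    (hA : ∀ (k : ℕ) (x t : ℝ), A k x t = ∑ i, (u i x t) ^ k * η i x t) :
    ∀ (k : ℕ) (x t : ℝ),
      pdt (A k) x t = pdx (A (k + 1)) x t + (k : ℝ) * A (k - 1) x t * pdx (A 0) x t := by
  intro k x t
  have hu_diff i : Differentiable ℝ (Function.uncurry (u i)) := (hu i).differentiable (by simp)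
  have hη_diff i : Differentiable ℝ (Function.uncurry (η i)) := (hη i).differentiable (by simp)
  obtain rfl : A = fun m x t => ∑ i, u i x t ^ m * η i x t := by
    funext m x t
    exact hA m x t
  have hA₀ : pdx (fun x' t' => ∑ i, u i x' t' ^ 0 * η i x' t') x t = ∑ i, pdx (η i) x t := by
    rw [pdx_sum_pow_mul hu_diff hη_diff]
    simp
  rw [pdt_sum_pow_mul hu_diff hη_diff, pdx_sum_pow_mul hu_diff hη_diff, hA₀, mul_assoc (k : ℝ), Finset.sum_mul,
    Finset.mul_sum, ← Finset.sum_add_distrib]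
  refine Finset.sum_congr rfl fun i _ => ?_
  rw [h1, h2, pdx_sq_div_two_add_sum (hu_diff i) hη_diff, pdx_mul (hu_diff i) (hη_diff i),
    benney_summand_identity]

/-- The Zakharov reduction: solutions of the dispersionless vector NLS system
`∂ₜ uᵢ = ∂ₓ[uᵢ²/2 + Σ η_k]`, `∂ₜ ηᵢ = ∂ₓ(uᵢηᵢ)` give moments `A_k = Σ uᵢᵏ ηᵢ`
satisfying the Benney chain `∂ₜ A_k = ∂ₓ A_{k+1} + k A_{k−1} ∂ₓ A₀`
(the last term being zero for `k = 0`). -/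
theorem zakharov_reduction_satisfies_benney_chain
    (N : ℕ) (hN : 1 ≤ N) (u η : Fin N → ℝ → ℝ → ℝ)
    (hu : ∀ i, ContDiff ℝ (⊤ : ℕ∞) (Function.uncurry (u i)))
    (hη : ∀ i, ContDiff ℝ (⊤ : ℕ∞) (Function.uncurry (η i)))
    (h1 : ∀ (i : Fin N) (x t : ℝ),
      pdt (u i) x t = pdx (fun x' t' => (u i x' t') ^ 2 / 2 + ∑ k, η k x' t') x t)
    (h2 : ∀ (i : Fin N) (x t : ℝ),
      pdt (η i) x t = pdx (fun x' t' => u i x' t' * η i x' t') x t)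
    (A : ℕ → ℝ → ℝ → ℝ)
    (hA : ∀ (k : ℕ) (x t : ℝ), A k x t = ∑ i, (u i x t) ^ k * η i x t) :
    ∀ (k : ℕ) (x t : ℝ),
      pdt (A k) x t = pdx (A (k + 1)) x t + (k : ℝ) * A (k - 1) x t * pdx (A 0) x t :=
  zakharov_reduction_satisfies_benney_chain_general N u η hu hη h1 h2 A hA
end
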